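/- For every N ≥ 5, the minimum of E₅ over all conformations of length N equals −(N−4): every conformation Γ of length N satisfies E₅(Γ) ≥ −(N−4), and equality is attained both by the lattice α-helix of length N and by the lattice β-strand of length N. -/
import Mathlib


/-- Points of the cubic lattice `ℤ³`. -/
abbrev P3 : Type := Fin 3 → ℤ

def e1 : P3 := ![1, 0, 0]
def e2 : P3 := ![0, 1, 0]
def e3 : P3 := ![0, 0, 1]

/-- Squared Euclidean norm of an integer vector; it equals `1` iff the
Euclidean norm equals `1`. -/
def sqNorm (v : P3) : ℤ := ∑ k, (v k) ^ 2

/-- A conformation of length `N`: an injective map on `{1, …, N}` whose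
consecutive steps have Euclidean length one. -/
def IsConformation (N : ℕ) (Γ : ℕ → P3) : Prop :=
  Set.InjOn Γ (Set.Icc 1 N) ∧ ∀ i, 1 ≤ i → i < N → sqNorm (Γ (i + 1) - Γ i) = 1

/-- A lattice rotation: an orthogonal integer matrix of determinant one
(equivalently, a linear isometry of `ℝ³` mapping `ℤ³` onto `ℤ³` with
determinant one). -/
def IsLatticeRotation (R : Matrix (Fin 3) (Fin 3) ℤ) : Prop :=
  R.transpose * R = 1 ∧ R.det = 1

/-- Equivalence of length-5 conformations: `Δ' k = R (Δ k) + t` for a lattice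
rotation `R` and translation `t ∈ ℤ³`. -/
def Equiv5 (Δ Δ' : Fin 5 → P3) : Prop :=
  ∃ (R : Matrix (Fin 3) (Fin 3) ℤ) (t : P3),
    IsLatticeRotation R ∧ ∀ k, Δ' k = R.mulVec (Δ k) + t

/-- Reversal of a length-5 conformation (`k ↦ Δ (6 - k)` in 1-based indexing). -/
def rev5 (Δ : Fin 5 → P3) : Fin 5 → P3 := fun k => Δ k.rev

/-- Conformation 1: vertices (0,0,0), (1,0,0), (1,1,0), (0,1,0), (0,1,1). -/
def conf1 : Fin 5 → P3 := ![![0, 0, 0], ![1, 0, 0], ![1, 1, 0], ![0, 1, 0], ![0, 1, 1]]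

/-- Conformation 2: vertices (0,0,0), (0,1,0), (−1,1,0), (−1,1,1), (−1,0,1). -/
def conf2 : Fin 5 → P3 := ![![0, 0, 0], ![0, 1, 0], ![-1, 1, 0], ![-1, 1, 1], ![-1, 0, 1]]

/-- The `i`-th window of `Γ`: the 5-tuple `(Γ(i-2), …, Γ(i+2))`. -/
def window (Γ : ℕ → P3) (i : ℕ) : Fin 5 → P3 := fun k => Γ (i - 2 + (k : ℕ))

/-- `Φ(Δ) = 1`: the 5-tuple `Δ` or its reversal is equivalent to
conformation 1 or to conformation 2. -/
def WindowGood (Δ : Fin 5 → P3) : Prop :=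
  Equiv5 Δ conf1 ∨ Equiv5 (rev5 Δ) conf1 ∨ Equiv5 Δ conf2 ∨ Equiv5 (rev5 Δ) conf2

open Classical in
/-- The function `Φ` on length-5 conformations. -/
noncomputable def Phi (Δ : Fin 5 → P3) : ℤ := if WindowGood Δ then 1 else 0

/-- The energy `E₅(Γ) = −Σ_{i=3}^{N−2} Φ(Γ_i)`. -/
noncomputable def E5 (N : ℕ) (Γ : ℕ → P3) : ℤ :=
  -∑ i ∈ Finset.Icc 3 (N - 2), Phi (window Γ i)

/-- A minimal conformation: a conformation all of whose windows satisfy `Φ = 1`. -/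
def IsMinimal (N : ℕ) (Γ : ℕ → P3) : Prop :=
  IsConformation N Γ ∧ ∀ i, 3 ≤ i → i ≤ N - 2 → WindowGood (window Γ i)

/-- The walk starting at the origin (in 1-based indexing) whose steps
cyclically repeat the given list. -/
def cyclicWalk (steps : List P3) : ℕ → P3
  | 0 => 0
  | 1 => 0
  | n + 2 => cyclicWalk steps (n + 1) + steps.getD (n % steps.length) 0

/-- The 16-term step sequence of the lattice α-helix. -/
def alphaStepList : List P3 :=
  [e1, e2, -e1, e3, -e2, e1, e2, e3, -e1, -e2, e1, e3, e2, -e1, -e2, e3]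

/-- The 4-term step sequence of the lattice β-strand. -/
def betaStepList : List P3 := [e1, e2, -e1, e3]

/-- The lattice α-helix (`H(1) = 0`, steps cyclically repeating `alphaStepList`). -/
def alphaHelix : ℕ → P3 := cyclicWalk alphaStepList

/-- The lattice β-strand (`B(1) = 0`, steps cyclically repeating `betaStepList`). -/
def betaStrand : ℕ → P3 := cyclicWalk betaStepList

/-- The four directed types of windows. -/
inductive DType : Type
  | r1  -- →1
  | l1  -- ←1
  | r2  -- →2
  | l2  -- ←2
deriving DecidableEq

/-- A window `Δ` has directed type `→1` (resp. `→2`) if it is equivalent to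
conformation 1 (resp. 2), and `←1` (resp. `←2`) if its reversal is. -/
def HasType (Δ : Fin 5 → P3) : DType → Prop
  | DType.r1 => Equiv5 Δ conf1
  | DType.l1 => Equiv5 (rev5 Δ) conf1
  | DType.r2 => Equiv5 Δ conf2
  | DType.l2 => Equiv5 (rev5 Δ) conf2

/-- The six allowed ordered pairs of directed types of consecutive windows:
(→1,←1), (←1,→1), (→1,→2), (→2,←2), (←2,←1), (←2,→2). -/
def allowedPairs : List (DType × DType) :=
  [(DType.r1, DType.l1), (DType.l1, DType.r1), (DType.r1, DType.r2),
   (DType.r2, DType.l2), (DType.l2, DType.l1), (DType.l2, DType.r2)]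

/-- `w` is the type sequence of `Γ` (a conformation of length `N`):
`w` has length `N − 4` and its `j`-th letter is the directed type of the
window `Γ_{3+j}`, `j = 0, …, N−5`. -/
def HasTypeSeq (N : ℕ) (Γ : ℕ → P3) (w : List DType) : Prop :=
  w.length = N - 4 ∧ ∀ j (h : j < w.length), HasType (window Γ (3 + j)) (w.get ⟨j, h⟩)

/-- The word `α = →1→2←2←1`. -/
def wordAlpha : List DType := [DType.r1, DType.r2, DType.l2, DType.l1]

/-- The word `β = →1←1`. -/
def wordBeta : List DType := [DType.r1, DType.l1]

/-- `v` is a finite concatenation of copies of the words `α` and `β`. -/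
def IsABConcat (v : List DType) : Prop :=
  ∃ L : List (List DType), (∀ u ∈ L, u = wordAlpha ∨ u = wordBeta) ∧ v = L.flatten

/-- A word is admissible if it is a contiguous subword (factor) of some finite
concatenation of copies of `α` and `β`. -/
def Admissible (w : List DType) : Prop := ∃ v, IsABConcat v ∧ w <:+: v

/-- The two kinds of monomers. -/
inductive AB : Type
  | A
  | B
deriving DecidableEq

/-- The number of occurrences of the letter `c` in the `i`-th 5-tuple
`S(i−2), …, S(i+2)` of the sequence `S`. -/
def countLetter (c : AB) (S : ℕ → AB) (i : ℕ) : ℕ :=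
  ((Finset.Icc (i - 2) (i + 2)).filter fun k => S k = c).card

open Classical in
/-- `Φ₁(Δ) = 1` iff `Δ` or its reversal is equivalent to conformation 1. -/
noncomputable def Phi1 (Δ : Fin 5 → P3) : ℝ :=
  if Equiv5 Δ conf1 ∨ Equiv5 (rev5 Δ) conf1 then 1 else 0

open Classical in
/-- `Φ₂(Δ) = 1` iff `Δ` or its reversal is equivalent to conformation 2. -/
noncomputable def Phi2 (Δ : Fin 5 → P3) : ℝ :=
  if Equiv5 Δ conf2 ∨ Equiv5 (rev5 Δ) conf2 then 1 else 0

/-- The heteropolymer energy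
`E₅′(S,Γ) = −Σᵢ [#_B(Sᵢ)(Φ₁(Γᵢ) + ε Φ₂(Γᵢ)) + #_A(Sᵢ)(Φ₂(Γᵢ) + ε Φ₁(Γᵢ))]`. -/
noncomputable def E5' (ε : ℝ) (S : ℕ → AB) (N : ℕ) (Γ : ℕ → P3) : ℝ :=
  -∑ i ∈ Finset.Icc 3 (N - 2),
    ((countLetter AB.B S i : ℝ) * (Phi1 (window Γ i) + ε * Phi2 (window Γ i)) +
      (countLetter AB.A S i : ℝ) * (Phi2 (window Γ i) + ε * Phi1 (window Γ i)))

/-! ### Auxiliary lemmas -/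

section Aux

def c4 : P3 := ![0, 0, 4]
def cB : P3 := ![0, 1, 1]

lemma wg0 (Δ : Fin 5 → P3) (R : Matrix (Fin 3) (Fin 3) ℤ) (t : P3)
    (h1 : R.transpose * R = 1) (h2 : R.det = 1)
    (h : ∀ k, conf1 k = R.mulVec (Δ k) + t) : WindowGood Δ :=
  Or.inl ⟨R, t, ⟨h1, h2⟩, h⟩

lemma wg1 (Δ : Fin 5 → P3) (R : Matrix (Fin 3) (Fin 3) ℤ) (t : P3)
    (h1 : R.transpose * R = 1) (h2 : R.det = 1)
    (h : ∀ k, conf1 k = R.mulVec (rev5 Δ k) + t) : WindowGood Δ :=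
  Or.inr (Or.inl ⟨R, t, ⟨h1, h2⟩, h⟩)

lemma wg2 (Δ : Fin 5 → P3) (R : Matrix (Fin 3) (Fin 3) ℤ) (t : P3)
    (h1 : R.transpose * R = 1) (h2 : R.det = 1)
    (h : ∀ k, conf2 k = R.mulVec (Δ k) + t) : WindowGood Δ :=
  Or.inr (Or.inr (Or.inl ⟨R, t, ⟨h1, h2⟩, h⟩))

lemma wg3 (Δ : Fin 5 → P3) (R : Matrix (Fin 3) (Fin 3) ℤ) (t : P3)
    (h1 : R.transpose * R = 1) (h2 : R.det = 1)
    (h : ∀ k, conf2 k = R.mulVec (rev5 Δ k) + t) : WindowGood Δ :=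
  Or.inr (Or.inr (Or.inr ⟨R, t, ⟨h1, h2⟩, h⟩))

lemma equiv5_shift {Δ Δ' : Fin 5 → P3} (c : P3) (h : Equiv5 Δ Δ') :
    Equiv5 (fun k => Δ k + c) Δ' := by
  obtain ⟨R, t, hR, hk⟩ := h
  refine ⟨R, t - R.mulVec c, hR, fun k => ?_⟩
  rw [Matrix.mulVec_add, hk k]
  abel

lemma windowGood_shift {Δ : Fin 5 → P3} (c : P3) (h : WindowGood Δ) :
    WindowGood (fun k => Δ k + c) := by
  have hrev : rev5 (fun k => Δ k + c) = fun k => rev5 Δ k + c := rfl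
  rcases h with h | h | h | h
  · exact Or.inl (equiv5_shift c h)
  · exact Or.inr (Or.inl (by rw [hrev]; exact equiv5_shift c h))
  · exact Or.inr (Or.inr (Or.inl (equiv5_shift c h)))
  · exact Or.inr (Or.inr (Or.inr (by rw [hrev]; exact equiv5_shift c h)))

/-! ### Generic walk lemmas -/

lemma cyclicWalk_succ (steps : List P3) (n : ℕ) :
    cyclicWalk steps (n + 2) = cyclicWalk steps (n + 1) + steps.getD (n % steps.length) 0 := rfl

/-! ### Alpha helix -/

lemma alpha_period : ∀ n : ℕ, alphaHelix (n + 1 + 16) = alphaHelix (n + 1) + c4 := by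
  intro n
  induction n with
  | zero => decide
  | succ m ih =>
      have h1 : alphaHelix (m + 1 + 1 + 16) =
          alphaHelix (m + 1 + 16) + alphaStepList.getD ((m + 16) % 16) 0 := by
        have := cyclicWalk_succ alphaStepList (m + 16)
        simpa [alphaHelix, alphaStepList] using this
      have h2 : alphaHelix (m + 1 + 1) =
          alphaHelix (m + 1) + alphaStepList.getD (m % 16) 0 := by
        have := cyclicWalk_succ alphaStepList m
        simpa [alphaHelix, alphaStepList] using this
      rw [h1, ih, h2, Nat.add_mod_right]
      abel

lemma alpha_formula : ∀ q r : ℕ, alphaHelix (16 * q + (r + 1)) = alphaHelix (r + 1) + q • c4 := by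
  intro q
  induction q with
  | zero => intro r; simp
  | succ p ih =>
      intro r
      have h : 16 * (p + 1) + (r + 1) = (16 * p + r) + 1 + 16 := by ring
      rw [h, alpha_period (16 * p + r)]
      have h2 : 16 * p + r + 1 = 16 * p + (r + 1) := by ring
      rw [h2, ih r, succ_nsmul]
      abel

lemma alpha_z_bound : ∀ r : Fin 16, 0 ≤ alphaHelix ((r : ℕ) + 1) 2 ∧ alphaHelix ((r : ℕ) + 1) 2 ≤ 3 := by decide

lemma alpha_base_inj : ∀ a b : Fin 16, alphaHelix ((a : ℕ) + 1) = alphaHelix ((b : ℕ) + 1) → a = b := by decide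

lemma alpha_inj : Function.Injective fun n => alphaHelix (n + 1) := by
  intro m n h
  simp only at h
  obtain ⟨qm, rm, hrm, hm⟩ : ∃ q r, r < 16 ∧ m = 16 * q + r := ⟨m / 16, m % 16, Nat.mod_lt _ (by norm_num), by omega⟩
  obtain ⟨qn, rn, hrn, hn⟩ : ∃ q r, r < 16 ∧ n = 16 * q + r := ⟨n / 16, n % 16, Nat.mod_lt _ (by norm_num), by omega⟩
  subst hm hn
  rw [show 16 * qm + rm + 1 = 16 * qm + (rm + 1) by ring, alpha_formula,
      show 16 * qn + rn + 1 = 16 * qn + (rn + 1) by ring, alpha_formula] at h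
  have hz := congrFun h 2
  have hc : ∀ q : ℕ, (q • c4) 2 = (q : ℤ) * 4 := by
    intro q; simp [c4, Pi.smul_apply]
  simp only [Pi.add_apply, hc] at hz
  have hbm := alpha_z_bound ⟨rm, hrm⟩
  have hbn := alpha_z_bound ⟨rn, hrn⟩
  simp only at hbm hbn
  have hq : qm = qn := by omega
  subst hq
  have hb : alphaHelix (rm + 1) = alphaHelix (rn + 1) := by
    funext k
    have := congrFun h k
    simp only [Pi.add_apply] at this
    omega
  have := alpha_base_inj ⟨rm, hrm⟩ ⟨rn, hrn⟩ (by simpa using hb)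
  have : rm = rn := by simpa [Fin.ext_iff] using this
  omega

lemma alpha_step_norm : ∀ i : ℕ, 1 ≤ i → sqNorm (alphaHelix (i + 1) - alphaHelix i) = 1 := by
  intro i hi
  obtain ⟨j, rfl⟩ : ∃ j, i = j + 1 := ⟨i - 1, by omega⟩
  have h : alphaHelix (j + 2) = alphaHelix (j + 1) + alphaStepList.getD (j % 16) 0 := by
    have := cyclicWalk_succ alphaStepList j
    simpa [alphaHelix, alphaStepList] using this
  rw [h, add_sub_cancel_left]
  have hfin : ∀ r : Fin 16, sqNorm (alphaStepList.getD (r : ℕ) 0) = 1 := by decide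
  exact hfin ⟨j % 16, Nat.mod_lt _ (by norm_num)⟩

lemma alpha_window_shift (i : ℕ) (hi : 3 ≤ i) :
    window alphaHelix (i + 16) = fun k => window alphaHelix i k + c4 := by
  funext k
  show alphaHelix (i + 16 - 2 + (k : ℕ)) = alphaHelix (i - 2 + (k : ℕ)) + c4
  have h1 : i + 16 - 2 + (k : ℕ) = (i - 3 + (k : ℕ)) + 1 + 16 := by omega
  have h2 : i - 2 + (k : ℕ) = (i - 3 + (k : ℕ)) + 1 := by omega
  rw [h1, h2, alpha_period]

lemma alpha_good : ∀ i : ℕ, 3 ≤ i → WindowGood (window alphaHelix i) := by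
  intro i
  induction i using Nat.strong_induction_on with
  | _ i ih =>
    intro hi
    by_cases hle : i ≤ 18
    · interval_cases i
      · exact wg0 _ !![1, 0, 0; 0, 1, 0; 0, 0, 1] ![0, 0, 0] (by decide) (by decide) (by decide)
      · exact wg2 _ !![1, 0, 0; 0, 1, 0; 0, 0, 1] ![-1, 0, 0] (by decide) (by decide) (by decide)
      · exact wg3 _ !![0, -1, 0; -1, 0, 0; 0, 0, -1] ![0, 1, 1] (by decide) (by decide) (by decide)
      · exact wg1 _ !![0, -1, 0; -1, 0, 0; 0, 0, -1] ![1, 1, 1] (by decide) (by decide) (by decide)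
      · exact wg0 _ !![0, -1, 0; 1, 0, 0; 0, 0, 1] ![1, 0, -1] (by decide) (by decide) (by decide)
      · exact wg2 _ !![0, -1, 0; 1, 0, 0; 0, 0, 1] ![0, 0, -1] (by decide) (by decide) (by decide)
      · exact wg3 _ !![-1, 0, 0; 0, 1, 0; 0, 0, -1] ![0, 0, 2] (by decide) (by decide) (by decide)
      · exact wg1 _ !![-1, 0, 0; 0, 1, 0; 0, 0, -1] ![1, 0, 2] (by decide) (by decide) (by decide)
      · exact wg0 _ !![-1, 0, 0; 0, -1, 0; 0, 0, 1] ![1, 1, -2] (by decide) (by decide) (by decide)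
      · exact wg2 _ !![-1, 0, 0; 0, -1, 0; 0, 0, 1] ![0, 1, -2] (by decide) (by decide) (by decide)
      · exact wg3 _ !![0, 1, 0; 1, 0, 0; 0, 0, -1] ![-1, 0, 3] (by decide) (by decide) (by decide)
      · exact wg1 _ !![0, 1, 0; 1, 0, 0; 0, 0, -1] ![0, 0, 3] (by decide) (by decide) (by decide)
      · exact wg0 _ !![0, 1, 0; -1, 0, 0; 0, 0, 1] ![0, 1, -3] (by decide) (by decide) (by decide)
      · exact wg2 _ !![0, 1, 0; -1, 0, 0; 0, 0, 1] ![-1, 1, -3] (by decide) (by decide) (by decide)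
      · exact wg3 _ !![1, 0, 0; 0, -1, 0; 0, 0, -1] ![-1, 1, 4] (by decide) (by decide) (by decide)
      · exact wg1 _ !![1, 0, 0; 0, -1, 0; 0, 0, -1] ![0, 1, 4] (by decide) (by decide) (by decide)
    · have h16 : i - 16 + 16 = i := by omega
      have hgood := ih (i - 16) (by omega) (by omega)
      rw [← h16, alpha_window_shift (i - 16) (by omega)]
      exact windowGood_shift c4 hgood


/-! ### Beta strand -/

lemma beta_period : ∀ n : ℕ, betaStrand (n + 1 + 4) = betaStrand (n + 1) + cB := by
  intro n
  induction n with
  | zero => decide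
  | succ m ih =>
      have h1 : betaStrand (m + 1 + 1 + 4) =
          betaStrand (m + 1 + 4) + betaStepList.getD ((m + 4) % 4) 0 := by
        have := cyclicWalk_succ betaStepList (m + 4)
        simpa [betaStrand, betaStepList] using this
      have h2 : betaStrand (m + 1 + 1) =
          betaStrand (m + 1) + betaStepList.getD (m % 4) 0 := by
        have := cyclicWalk_succ betaStepList m
        simpa [betaStrand, betaStepList] using this
      rw [h1, ih, h2, Nat.add_mod_right]
      abel

lemma beta_formula : ∀ q r : ℕ, betaStrand (4 * q + (r + 1)) = betaStrand (r + 1) + q • cB := by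
  intro q
  induction q with
  | zero => intro r; simp
  | succ p ih =>
      intro r
      have h : 4 * (p + 1) + (r + 1) = (4 * p + r) + 1 + 4 := by ring
      rw [h, beta_period (4 * p + r)]
      have h2 : 4 * p + r + 1 = 4 * p + (r + 1) := by ring
      rw [h2, ih r, succ_nsmul]
      abel

lemma beta_z_bound : ∀ r : Fin 4, betaStrand ((r : ℕ) + 1) 2 = 0 := by decide

lemma beta_base_inj : ∀ a b : Fin 4, betaStrand ((a : ℕ) + 1) = betaStrand ((b : ℕ) + 1) → a = b := by decide

lemma beta_inj : Function.Injective fun n => betaStrand (n + 1) := by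
  intro m n h
  simp only at h
  obtain ⟨qm, rm, hrm, hm⟩ : ∃ q r, r < 4 ∧ m = 4 * q + r := ⟨m / 4, m % 4, Nat.mod_lt _ (by norm_num), by omega⟩
  obtain ⟨qn, rn, hrn, hn⟩ : ∃ q r, r < 4 ∧ n = 4 * q + r := ⟨n / 4, n % 4, Nat.mod_lt _ (by norm_num), by omega⟩
  subst hm hn
  rw [show 4 * qm + rm + 1 = 4 * qm + (rm + 1) by ring, beta_formula,
      show 4 * qn + rn + 1 = 4 * qn + (rn + 1) by ring, beta_formula] at h
  have hz := congrFun h 2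
  have hc : ∀ q : ℕ, (q • cB) 2 = (q : ℤ) := by
    intro q; simp [cB, Pi.smul_apply]
  simp only [Pi.add_apply, hc] at hz
  have hbm := beta_z_bound ⟨rm, hrm⟩
  have hbn := beta_z_bound ⟨rn, hrn⟩
  simp only at hbm hbn
  have hq : qm = qn := by omega
  subst hq
  have hb : betaStrand (rm + 1) = betaStrand (rn + 1) := by
    funext k
    have := congrFun h k
    simp only [Pi.add_apply] at this
    omega
  have := beta_base_inj ⟨rm, hrm⟩ ⟨rn, hrn⟩ (by simpa using hb)
  have : rm = rn := by simpa [Fin.ext_iff] using this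
  omega

lemma beta_step_norm : ∀ i : ℕ, 1 ≤ i → sqNorm (betaStrand (i + 1) - betaStrand i) = 1 := by
  intro i hi
  obtain ⟨j, rfl⟩ : ∃ j, i = j + 1 := ⟨i - 1, by omega⟩
  have h : betaStrand (j + 2) = betaStrand (j + 1) + betaStepList.getD (j % 4) 0 := by
    have := cyclicWalk_succ betaStepList j
    simpa [betaStrand, betaStepList] using this
  rw [h, add_sub_cancel_left]
  have hfin : ∀ r : Fin 4, sqNorm (betaStepList.getD (r : ℕ) 0) = 1 := by decide
  exact hfin ⟨j % 4, Nat.mod_lt _ (by norm_num)⟩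

lemma beta_window_shift (i : ℕ) (hi : 3 ≤ i) :
    window betaStrand (i + 4) = fun k => window betaStrand i k + cB := by
  funext k
  show betaStrand (i + 4 - 2 + (k : ℕ)) = betaStrand (i - 2 + (k : ℕ)) + cB
  have h1 : i + 4 - 2 + (k : ℕ) = (i - 3 + (k : ℕ)) + 1 + 4 := by omega
  have h2 : i - 2 + (k : ℕ) = (i - 3 + (k : ℕ)) + 1 := by omega
  rw [h1, h2, beta_period]

lemma beta_good : ∀ i : ℕ, 3 ≤ i → WindowGood (window betaStrand i) := by
  intro i
  induction i using Nat.strong_induction_on with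
  | _ i ih =>
    intro hi
    by_cases hle : i ≤ 6
    · interval_cases i
      · exact wg0 _ !![1, 0, 0; 0, 1, 0; 0, 0, 1] ![0, 0, 0] (by decide) (by decide) (by decide)
      · exact wg1 _ !![-1, 0, 0; 0, 0, -1; 0, -1, 0] ![1, 1, 1] (by decide) (by decide) (by decide)
      · exact wg0 _ !![-1, 0, 0; 0, 0, 1; 0, 1, 0] ![1, 0, -1] (by decide) (by decide) (by decide)
      · exact wg1 _ !![1, 0, 0; 0, -1, 0; 0, 0, -1] ![0, 2, 1] (by decide) (by decide) (by decide)
    · have h4 : i - 4 + 4 = i := by omega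
      have hgood := ih (i - 4) (by omega) (by omega)
      rw [← h4, beta_window_shift (i - 4) (by omega)]
      exact windowGood_shift cB hgood

/-! ### Energy computations -/

lemma injOn_of_inj {Γ : ℕ → P3} (N : ℕ) (h : Function.Injective fun n => Γ (n + 1)) :
    Set.InjOn Γ (Set.Icc 1 N) := by
  intro a ha b hb hab
  simp only [Set.mem_Icc] at ha hb
  have h1 : a - 1 + 1 = a := by omega
  have h2 : b - 1 + 1 = b := by omega
  have := h (a₁ := a - 1) (a₂ := b - 1) (by simp only [h1, h2]; exact hab)
  omega

lemma E5_of_good {Γ : ℕ → P3} (N : ℕ) (hN : 5 ≤ N)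
    (h : ∀ i, 3 ≤ i → i ≤ N - 2 → WindowGood (window Γ i)) :
    E5 N Γ = -((N : ℤ) - 4) := by
  unfold E5
  have : ∑ i ∈ Finset.Icc 3 (N - 2), Phi (window Γ i) = ∑ i ∈ Finset.Icc 3 (N - 2), 1 := by
    apply Finset.sum_congr rfl
    intro i hi
    simp only [Finset.mem_Icc] at hi
    simp [Phi, h i hi.1 hi.2]
  rw [this, Finset.sum_const, Nat.card_Icc]
  have : N - 2 + 1 - 3 = N - 4 := by omega
  rw [this]
  have h4 : ((N - 4 : ℕ) : ℤ) = (N : ℤ) - 4 := by omega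
  simp [h4]

lemma E5_lower {Γ : ℕ → P3} (N : ℕ) (hN : 5 ≤ N) : -((N : ℤ) - 4) ≤ E5 N Γ := by
  unfold E5
  rw [neg_le_neg_iff]
  calc ∑ i ∈ Finset.Icc 3 (N - 2), Phi (window Γ i)
      ≤ ∑ _i ∈ Finset.Icc 3 (N - 2), 1 := by
        apply Finset.sum_le_sum
        intro i _
        unfold Phi
        split <;> norm_num
    _ = (N : ℤ) - 4 := by
        rw [Finset.sum_const, Nat.card_Icc]
        have : N - 2 + 1 - 3 = N - 4 := by omega
        rw [this]
        have h4 : ((N - 4 : ℕ) : ℤ) = (N : ℤ) - 4 := by omega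
        simp [h4]

end Aux

/-- For every `N ≥ 5`, the minimum of `E₅` over all conformations
of length `N` equals `−(N−4)`: every conformation satisfies
`E₅(Γ) ≥ −(N−4)`, and equality is attained both by the lattice α-helix and by
the lattice β-strand of length `N`. -/
theorem E5_minimum (N : ℕ) (hN : 5 ≤ N) :
    (∀ Γ : ℕ → P3, IsConformation N Γ → -((N : ℤ) - 4) ≤ E5 N Γ) ∧
      IsConformation N alphaHelix ∧ E5 N alphaHelix = -((N : ℤ) - 4) ∧
      IsConformation N betaStrand ∧ E5 N betaStrand = -((N : ℤ) - 4) := by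
  refine ⟨fun Γ _ => E5_lower N hN,
    ⟨injOn_of_inj N alpha_inj, fun i h1 _ => alpha_step_norm i h1⟩,
    E5_of_good N hN (fun i hi _ => alpha_good i hi),
    ⟨injOn_of_inj N beta_inj, fun i h1 _ => beta_step_norm i h1⟩,
    E5_of_good N hN (fun i hi _ => beta_good i hi)⟩
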